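/- Suppose there exist two distinct literals sᵢ, sᵢ' ∈ S such that (a) sᵢ and sᵢ' have different predicate symbols, and (b) neither sᵢ nor sᵢ' admits a positive matcher to any literal of M. Then S and M are not the side and main premises of subsumption resolution. -/
import Mathlib


/-- First-order terms over variables `V`. -/
inductive Trm (V : Type) : Type
  | var : V → Trm V
  | fn : ℕ → Trm V
  | app : Trm V → Trm V → Trm V
deriving DecidableEq

/-- Applying a (total) substitution to a term. -/
def Trm.subst {V : Type} (σ : V → Trm V) : Trm V → Trm V
  | .var x => σ x
  | .fn f => .fn f
  | .app t u => .app (t.subst σ) (u.subst σ)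

/-- A first-order literal: a polarity, a predicate symbol and an argument term. -/
structure Lit (V : Type) where
  pos : Bool
  pred : ℕ
  arg : Trm V
deriving DecidableEq

/-- The complement of a literal. -/
def Lit.neg {V : Type} (l : Lit V) : Lit V := { l with pos := !l.pos }

/-- Applying a substitution to a literal. -/
def Lit.subst {V : Type} (σ : V → Trm V) (l : Lit V) : Lit V :=
  { l with arg := l.arg.subst σ }

/-- A clause is a multiset of literals. -/
abbrev Clause (V : Type) := Multiset (Lit V)

/-- Applying a substitution to a clause. -/
def Clause.subst {V : Type} (σ : V → Trm V) (C : Clause V) : Clause V :=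
  C.map (Lit.subst σ)

/-- `S` subsumes `M`: some substitution maps `S` to a sub-multiset of `M`. -/
def Subsumes {V : Type} (S M : Clause V) : Prop :=
  ∃ σ : V → Trm V, Clause.subst σ S ≤ M

/-- `S` and `M` are side and main premises of subsumption resolution:
there are `σ`, a nonempty `S' ⊆ S` and `m' ∈ M` with `σ(S') = {¬m'}` and
`σ(S \ S') ⊆ M \ {m'}`. -/
def SubRes {V : Type} [DecidableEq V] (S M : Clause V) : Prop :=
  ∃ (σ : V → Trm V) (S' : Clause V) (m' : Lit V),
    S' ≤ S ∧ S' ≠ 0 ∧ m' ∈ M ∧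
    (∀ l ∈ S', Lit.subst σ l = m'.neg) ∧
    (∀ l ∈ S - S', Lit.subst σ l ∈ M.erase m')

/-- Partial substitutions. -/
abbrev PSub (V : Type) := V → Option (Trm V)

/-- Partial application of a partial substitution to a term. -/
def Trm.psubst {V : Type} (θ : PSub V) : Trm V → Option (Trm V)
  | .var x => θ x
  | .fn f => some (.fn f)
  | .app t u => (t.psubst θ).bind fun t' => (u.psubst θ).map fun u' => .app t' u'

/-- Partial application of a partial substitution to a literal. -/
def Lit.psubst {V : Type} (θ : PSub V) (l : Lit V) : Option (Lit V) :=
  (l.arg.psubst θ).map fun t => { l with arg := t }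

/-- `θ ⊆ σ`: the total substitution `σ` extends the partial substitution `θ`. -/
def PSub.le {V : Type} (θ : PSub V) (σ : V → Trm V) : Prop :=
  ∀ x t, θ x = some t → σ x = t

/-- The clause with literals `s 0, …, s (k-1)`. -/
def clauseOfFn {V : Type} {k : ℕ} (s : Fin k → Lit V) : Clause V :=
  (List.ofFn s : List (Lit V))

/-- The indexed clause `m` has no duplicate literals. -/
def NoDupIdx {V : Type} {n : ℕ} (m : Fin n → Lit V) : Prop :=
  ∀ j j' : Fin n, m j = m j' → j = j'

/-- The indexed clause `m` has no duplicate atoms: no two (distinct) literals are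
equal or complementary. -/
def NoDupAtomsIdx {V : Type} {n : ℕ} (m : Fin n → Lit V) : Prop :=
  (∀ j j' : Fin n, m j = m j' → j = j') ∧ (∀ j j' : Fin n, m j ≠ (m j').neg)

/-- `Sp` is the family of positive matchers `Σ⁺ᵢⱼ`: `Sp i j = some θ` exactly when a
substitution matching `sᵢ` to `mⱼ` exists, in which case `θ` is such a (partial)
matcher and every total match is an extension of it. -/
def IsMatcherFamilyPos {V : Type} {k n : ℕ} (s : Fin k → Lit V) (m : Fin n → Lit V)
    (Sp : Fin k → Fin n → Option (PSub V)) : Prop :=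
  (∀ i j θ, Sp i j = some θ → Lit.psubst θ (s i) = some (m j)) ∧
  (∀ i j (σ : V → Trm V), Lit.subst σ (s i) = m j → ∃ θ, Sp i j = some θ ∧ PSub.le θ σ)

/-- `Sn` is the family of negative matchers `Σ⁻ᵢⱼ` (matching `sᵢ` to `¬mⱼ`). -/
def IsMatcherFamilyNeg {V : Type} {k n : ℕ} (s : Fin k → Lit V) (m : Fin n → Lit V)
    (Sn : Fin k → Fin n → Option (PSub V)) : Prop :=
  (∀ i j θ, Sn i j = some θ → Lit.psubst θ (s i) = some ((m j).neg)) ∧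
  (∀ i j (σ : V → Trm V), Lit.subst σ (s i) = (m j).neg → ∃ θ, Sn i j = some θ ∧ PSub.le θ σ)

/-- The (predicate, polarity) header of a literal. -/
def Lit.header {V : Type} (l : Lit V) : ℕ × Bool := (l.pred, l.pos)

/-- Predicate matches for pruning subsumption resolution: if two distinct literals
of `S` have different predicate symbols and neither admits a positive matcher to
any literal of `M`, then `S`, `M` are not premises of subsumption resolution. -/
theorem stmt13 {V : Type} [DecidableEq V] {k n : ℕ}
    (s : Fin k → Lit V) (m : Fin n → Lit V)
    (h : ∃ i i' : Fin k, i ≠ i' ∧ (s i).pred ≠ (s i').pred ∧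
      (∀ j, ∀ σ : V → Trm V, Lit.subst σ (s i) ≠ m j) ∧
      (∀ j, ∀ σ : V → Trm V, Lit.subst σ (s i') ≠ m j)) :
    ¬ SubRes (clauseOfFn s) (clauseOfFn m) := by
  obtain ⟨i, i', hne, hpred, hi, hi'⟩ := h
  rintro ⟨σ, S', m', hle, hS0, hm', hS', hrest⟩
  have key : ∀ a : Fin k, (∀ j, ∀ τ : V → Trm V, Lit.subst τ (s a) ≠ m j) →
      Lit.subst σ (s a) = m'.neg := by
    intro a ha
    have hmem : s a ∈ clauseOfFn s := by
      simp [clauseOfFn, List.mem_ofFn]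
    by_cases hc : s a ∈ clauseOfFn s - S'
    · exfalso
      have := hrest _ hc
      have hM : Lit.subst σ (s a) ∈ clauseOfFn m := Multiset.mem_of_mem_erase this
      simp only [clauseOfFn, Multiset.mem_coe, List.mem_ofFn] at hM
      obtain ⟨j, hj⟩ := hM
      exact ha j σ hj.symm
    · apply hS'
      have h1 : 0 < Multiset.count (s a) (clauseOfFn s) := Multiset.count_pos.mpr hmem
      have h2 : Multiset.count (s a) (clauseOfFn s - S') = 0 :=
        Multiset.count_eq_zero.mpr hc
      rw [Multiset.count_sub] at h2
      have : 0 < Multiset.count (s a) S' := by omega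
      exact Multiset.count_pos.mp this
  have e1 := key i hi
  have e2 := key i' hi'
  apply hpred
  have : (Lit.subst σ (s i)).pred = (Lit.subst σ (s i')).pred := by rw [e1, e2]
  simpa [Lit.subst] using this
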